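/- Let d2, a2, h, q, p > 0 and 0 ≤ x1 < L. Let ũ : ℝ → ℝ be continuous with ũ(x) ≥ 0 for all x ∈ [x1, L] and ũ(x0) > 0 for some x0 ∈ [x1, L]. Suppose w : ℝ → ℝ is twice continuously differentiable and satisfies d2·w''(x) − a2·w'(x) + h − q·w(x) − p·ũ(x)·w(x) = 0 for all x ∈ [x1, L], together with the boundary conditions d2·w'(x1) − a2·w(x1) = 0 and w'(L) = 0, and suppose w̃ is a solution of the upstream toxicant boundary value problem on [x1, L] (same parameters d2, a2, h, q). Then 0 < w(x) < w̃(x) for every x ∈ (x1, L). -/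

import Mathlib

open Set

section Helpers

lemma contDiff2_deriv {f : ℝ → ℝ} (hf : ContDiff ℝ 2 f) : ContDiff ℝ 1 (deriv f) :=
  (contDiff_succ_iff_deriv.mp (by norm_num at hf ⊢; exact hf : ContDiff ℝ (1+1) f)).2.2

lemma negcurv_left {f : ℝ → ℝ} (hf : ContDiff ℝ 2 f) {a c : ℝ} (hac : a < c)
    (h1 : deriv f c = 0) (h2 : deriv (deriv f) c < 0) :
    ∃ y ∈ Ioo a c, f y < f c := by
  have hd1 : Differentiable ℝ f := hf.differentiable (by norm_num)
  have hd2 : Differentiable ℝ (deriv f) := (contDiff2_deriv hf).differentiable one_ne_zero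
  have hc2 : Continuous (deriv (deriv f)) := (contDiff2_deriv hf).continuous_deriv le_rfl
  obtain ⟨ε, hε, hball⟩ := Metric.eventually_nhds_iff.mp
    ((hc2.continuousAt (x := c)).eventually_lt continuousAt_const h2 |>.mono (fun x hx => hx))
  set b := max (c - ε/2) ((a + c)/2) with hb
  have hbc : b < c := by apply max_lt <;> linarith
  have hab : a < b := lt_max_of_lt_right (by linarith)
  have hneg : ∀ x ∈ Ioo b c, deriv (deriv f) x < 0 := by
    intro x hx
    apply hball
    rw [Real.dist_eq, abs_lt]
    have h3 : c - ε/2 ≤ b := le_max_left _ _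
    obtain ⟨h4, h5⟩ := hx
    constructor <;> linarith
  have hanti : StrictAntiOn (deriv f) (Icc b c) := by
    apply strictAntiOn_of_deriv_neg (convex_Icc b c) (hd2.continuous.continuousOn)
    rwa [interior_Icc]
  have hpos : ∀ y ∈ Ioo b c, 0 < deriv f y := by
    intro y hy
    have := hanti ⟨hy.1.le, hy.2.le⟩ ⟨hbc.le, le_refl c⟩ hy.2
    rw [h1] at this; exact this
  have hmono : StrictMonoOn f (Icc b c) := by
    apply strictMonoOn_of_deriv_pos (convex_Icc b c) (hd1.continuous.continuousOn)
    rwa [interior_Icc]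
  exact ⟨b, ⟨hab, hbc⟩, hmono ⟨le_refl b, hbc.le⟩ ⟨hbc.le, le_refl c⟩ hbc⟩

lemma negcurv_right {f : ℝ → ℝ} (hf : ContDiff ℝ 2 f) {c b : ℝ} (hcb : c < b)
    (h1 : deriv f c = 0) (h2 : deriv (deriv f) c < 0) :
    ∃ y ∈ Ioo c b, f y < f c := by
  have hd1 : Differentiable ℝ f := hf.differentiable (by norm_num)
  have hd2 : Differentiable ℝ (deriv f) := (contDiff2_deriv hf).differentiable one_ne_zero
  have hc2 : Continuous (deriv (deriv f)) := (contDiff2_deriv hf).continuous_deriv le_rfl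
  obtain ⟨ε, hε, hball⟩ := Metric.eventually_nhds_iff.mp
    ((hc2.continuousAt (x := c)).eventually_lt continuousAt_const h2 |>.mono (fun x hx => hx))
  set d := min (c + ε/2) ((c + b)/2) with hd
  have hcd : c < d := lt_min (by linarith) (by linarith)
  have hdb : d < b := min_lt_of_right_lt (by linarith)
  have hneg : ∀ x ∈ Ioo c d, deriv (deriv f) x < 0 := by
    intro x hx
    apply hball
    rw [Real.dist_eq, abs_lt]
    have h3 : d ≤ c + ε/2 := min_le_left _ _
    obtain ⟨h4, h5⟩ := hx
    constructor <;> linarith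
  have hanti : StrictAntiOn (deriv f) (Icc c d) := by
    apply strictAntiOn_of_deriv_neg (convex_Icc c d) (hd2.continuous.continuousOn)
    rwa [interior_Icc]
  have hneg' : ∀ y ∈ Ioo c d, deriv f y < 0 := by
    intro y hy
    have := hanti ⟨le_refl c, hcd.le⟩ ⟨hy.1.le, hy.2.le⟩ hy.1
    rw [h1] at this; exact this
  have hmono : StrictAntiOn f (Icc c d) := by
    apply strictAntiOn_of_deriv_neg (convex_Icc c d) (hd1.continuous.continuousOn)
    rwa [interior_Icc]
  exact ⟨d, ⟨hcd, hdb⟩, hmono ⟨le_refl c, hcd.le⟩ ⟨hcd.le, le_refl d⟩ hcd⟩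

lemma min_left_deriv {f : ℝ → ℝ} {a b : ℝ} (hab : a < b) (hd : DifferentiableAt ℝ f a)
    (hm : IsMinOn f (Icc a b) a) : 0 ≤ deriv f a := by
  have hy : (b - a) ∈ posTangentConeAt (Icc a b) a := by
    apply mem_posTangentConeAt_of_segment_subset
    rw [add_sub_cancel, segment_eq_Icc hab.le]
  have h1 : IsLocalMinOn f (Icc a b) a := hm.filter_mono inf_le_right
  have := h1.hasFDerivWithinAt_nonneg (hd.hasDerivAt.hasFDerivAt.hasFDerivWithinAt) hy
  simp only [ContinuousLinearMap.toSpanSingleton_apply,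
    smul_eq_mul] at this
  nlinarith [this]

lemma min_right_deriv {f : ℝ → ℝ} {a b : ℝ} (hab : a < b) (hd : DifferentiableAt ℝ f b)
    (hm : IsMinOn f (Icc a b) b) : deriv f b ≤ 0 := by
  have hy : (a - b) ∈ posTangentConeAt (Icc a b) b := by
    apply mem_posTangentConeAt_of_segment_subset
    rw [add_sub_cancel, segment_symm, segment_eq_Icc hab.le]
  have h1 : IsLocalMinOn f (Icc a b) b := hm.filter_mono inf_le_right
  have := h1.hasFDerivWithinAt_nonneg (hd.hasDerivAt.hasFDerivAt.hasFDerivWithinAt) hy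
  simp only [ContinuousLinearMap.toSpanSingleton_apply,
    smul_eq_mul] at this
  nlinarith [this]

lemma weak_min {d2 a2 x1 L : ℝ} {f F : ℝ → ℝ} (hd2 : 0 < d2) (ha2 : 0 < a2)
    (hx1L : x1 < L) (hf : ContDiff ℝ 2 f)
    (hode : ∀ x ∈ Icc x1 L, d2 * deriv (deriv f) x = a2 * deriv f x + F x)
    (hneg : ∀ x ∈ Icc x1 L, f x ≤ 0 → F x < 0)
    (hbc1 : d2 * deriv f x1 - a2 * f x1 ≤ 0)
    (hbc2 : deriv f L = 0) : ∀ x ∈ Icc x1 L, 0 < f x := by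
  have hd1 : Differentiable ℝ f := hf.differentiable (by norm_num)
  obtain ⟨c, hcmem, hcmin⟩ := (isCompact_Icc (a := x1) (b := L)).exists_isMinOn
    (nonempty_Icc.mpr hx1L.le) (hf.continuous.continuousOn)
  suffices hc : 0 < f c by
    intro x hx; exact lt_of_lt_of_le hc (hcmin hx)
  by_contra hle
  push_neg at hle
  have hFc := hneg c hcmem hle
  rcases eq_or_lt_of_le hcmem.1 with hc1 | hc1
  · subst hc1
    have hd0 : 0 ≤ deriv f x1 := min_left_deriv hx1L (hd1 x1) hcmin
    have hfc0 : f x1 = 0 := le_antisymm hle (by nlinarith)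
    have hdc0 : deriv f x1 = 0 := by nlinarith
    have hcurv : deriv (deriv f) x1 < 0 := by
      have := hode x1 hcmem
      rw [hdc0] at this; nlinarith
    obtain ⟨y, hy, hfy⟩ := negcurv_right hf hx1L hdc0 hcurv
    exact absurd (hcmin ⟨hy.1.le, hy.2.le⟩) (not_le.mpr hfy)
  · rcases eq_or_lt_of_le hcmem.2 with hc2 | hc2
    · subst hc2
      have hcurv : deriv (deriv f) c < 0 := by
        have := hode c hcmem
        rw [hbc2] at this; nlinarith
      obtain ⟨y, hy, hfy⟩ := negcurv_left hf hc1 hbc2 hcurv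
      exact absurd (hcmin ⟨hy.1.le, hy.2.le⟩) (not_le.mpr hfy)
    · have hlm : IsLocalMin f c := hcmin.isLocalMin (Icc_mem_nhds hc1 hc2)
      have hdc0 : deriv f c = 0 := hlm.deriv_eq_zero
      have hcurv : deriv (deriv f) c < 0 := by
        have := hode c hcmem
        rw [hdc0] at this; nlinarith
      obtain ⟨y, hy, hfy⟩ := negcurv_left hf hc1 hdc0 hcurv
      exact absurd (hcmin ⟨hy.1.le, hy.2.le.trans hc2.le⟩) (not_le.mpr hfy)

lemma barrier_nonneg {d2 a2 q lo hi : ℝ} {ψ : ℝ → ℝ} (hd2 : 0 < d2) (hq : 0 < q)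
    (hlohi : lo < hi) (hψ : ContDiff ℝ 2 ψ)
    (hG : ∀ x ∈ Icc lo hi,
      d2 * deriv (deriv ψ) x - a2 * deriv ψ x - q * ψ x ≤ 0)
    (hend1 : ψ lo = 0) (hend2 : ψ hi = 0) : ∀ x ∈ Icc lo hi, 0 ≤ ψ x := by
  obtain ⟨m, hmmem, hmmin⟩ := (isCompact_Icc (a := lo) (b := hi)).exists_isMinOn
    (nonempty_Icc.mpr hlohi.le) (hψ.continuous.continuousOn)
  suffices hm : 0 ≤ ψ m by
    intro x hx; exact le_trans hm (hmmin hx)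
  by_contra hle
  push_neg at hle
  have hm1 : lo < m := by
    rcases eq_or_lt_of_le hmmem.1 with h | h
    · exfalso; rw [← h, hend1] at hle; exact absurd hle (lt_irrefl 0)
    · exact h
  have hm2 : m < hi := by
    rcases eq_or_lt_of_le hmmem.2 with h | h
    · exfalso; rw [h, hend2] at hle; exact absurd hle (lt_irrefl 0)
    · exact h
  have hlm : IsLocalMin ψ m := hmmin.isLocalMin (Icc_mem_nhds hm1 hm2)
  have hdm : deriv ψ m = 0 := hlm.deriv_eq_zero
  have hcurv : deriv (deriv ψ) m < 0 := by
    have := hG m hmmem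
    rw [hdm] at this; nlinarith
  obtain ⟨y, hy, hfy⟩ := negcurv_left hψ hm1 hdm hcurv
  exact absurd (hmmin ⟨hy.1.le, hy.2.le.trans hm2.le⟩) (not_le.mpr hfy)

end Helpers

/-- `w` is a solution of the upstream toxicant boundary value problem with
parameters `d2, a2, h, q` on the interval `[x1, L]`. -/
def IsUpstreamSolution (d2 a2 h q x1 L : ℝ) (w : ℝ → ℝ) : Prop :=
  ContDiff ℝ 2 w ∧
  (∀ x ∈ Set.Icc x1 L,
      d2 * deriv (deriv w) x - a2 * deriv w x + h - q * w x = 0) ∧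
  d2 * deriv w x1 - a2 * w x1 = 0 ∧ deriv w L = 0

set_option maxHeartbeats 1600000 in
/-- a solution of the upstream problem with additional uptake
term `−p·ũ·w` lies strictly between `0` and the toxicant-only solution `w̃`
on `(x1, L)`. -/
theorem upstream_comparison_with_uptake
    (d2 a2 h q p x1 L : ℝ) (u w wt : ℝ → ℝ)
    (hd2 : 0 < d2) (ha2 : 0 < a2) (hh : 0 < h) (hq : 0 < q) (hp : 0 < p)
    (hx1 : 0 ≤ x1) (hx1L : x1 < L)
    (hu_cont : Continuous u)
    (hu_nonneg : ∀ x ∈ Set.Icc x1 L, 0 ≤ u x)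
    (hu_pos : ∃ x0 ∈ Set.Icc x1 L, 0 < u x0)
    (hw_smooth : ContDiff ℝ 2 w)
    (hw_ode : ∀ x ∈ Set.Icc x1 L,
      d2 * deriv (deriv w) x - a2 * deriv w x + h - q * w x - p * u x * w x = 0)
    (hw_bc1 : d2 * deriv w x1 - a2 * w x1 = 0)
    (hw_bc2 : deriv w L = 0)
    (hwt : IsUpstreamSolution d2 a2 h q x1 L wt) :
    ∀ x ∈ Set.Ioo x1 L, 0 < w x ∧ w x < wt x := by
  obtain ⟨hwt_smooth, hwt_ode, hwt_bc1, hwt_bc2⟩ := hwt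
  have hw_d : Differentiable ℝ w := hw_smooth.differentiable (by norm_num)
  have hw_d2 : Differentiable ℝ (deriv w) := (contDiff2_deriv hw_smooth).differentiable one_ne_zero
  have hwt_d : Differentiable ℝ wt := hwt_smooth.differentiable (by norm_num)
  have hwt_d2 : Differentiable ℝ (deriv wt) := (contDiff2_deriv hwt_smooth).differentiable one_ne_zero
  -- Step 1: w > 0 on [x1, L]
  have hw_pos : ∀ x ∈ Icc x1 L, 0 < w x := by
    apply weak_min hd2 ha2 hx1L hw_smooth
      (F := fun x => q * w x + p * u x * w x - h)
    · intro x hx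
      have := hw_ode x hx
      linarith
    · intro x hx hwx
      have hu := hu_nonneg x hx
      nlinarith [mul_nonpos_of_nonneg_of_nonpos hq.le hwx,
        mul_nonpos_of_nonneg_of_nonpos (mul_nonneg hp.le hu) hwx]
    · linarith [hw_bc1]
    · exact hw_bc2
  -- derivative computations for v = wt - w
  have hdv : ∀ x, deriv (fun y => wt y - w y) x = deriv wt x - deriv w x := by
    intro x; exact deriv_sub (hwt_d x) (hw_d x)
  have hddv : ∀ x, deriv (deriv (fun y => wt y - w y)) x
      = deriv (deriv wt) x - deriv (deriv w) x := by
    intro x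
    have h1 : deriv (fun y => wt y - w y) = fun y => deriv wt y - deriv w y := funext hdv
    rw [h1]
    exact deriv_sub (hwt_d2 x) (hw_d2 x)
  have hv_smooth : ContDiff ℝ 2 (fun y => wt y - w y) := hwt_smooth.sub hw_smooth
  -- Step 2a: wt - w ≥ 0 on [x1, L]
  have hv_nonneg : ∀ x ∈ Icc x1 L, 0 ≤ wt x - w x := by
    have key : ∀ ε : ℝ, 0 < ε → ∀ x ∈ Icc x1 L, 0 < wt x - w x + ε := by
      intro ε hε
      have hdf : ∀ x, deriv (fun y => wt y - w y + ε) x = deriv wt x - deriv w x := by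
        intro x
        rw [deriv_add_const, hdv]
      have hddf : ∀ x, deriv (deriv (fun y => wt y - w y + ε)) x
          = deriv (deriv wt) x - deriv (deriv w) x := by
        intro x
        have h1 : deriv (fun y => wt y - w y + ε) = fun y => deriv wt y - deriv w y :=
          funext hdf
        rw [h1]
        exact deriv_sub (hwt_d2 x) (hw_d2 x)
      apply weak_min hd2 ha2 hx1L (hv_smooth.add contDiff_const)
        (F := fun x => q * (wt x - w x) - p * u x * w x)
      · intro x hx
        have h1 := hw_ode x hx
        have h2 := hwt_ode x hx
        rw [hdf x, hddf x]
        linarith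
      · intro x hx hfx
        have hu := hu_nonneg x hx
        have hw0 := hw_pos x hx
        have hfx' : wt x - w x + ε ≤ 0 := hfx
        nlinarith [mul_nonpos_of_nonneg_of_nonpos hq.le hfx',
          mul_nonneg (mul_nonneg hp.le hu) hw0.le, mul_pos hq hε]
      · show d2 * deriv (fun y => wt y - w y + ε) x1 - a2 * (wt x1 - w x1 + ε) ≤ 0
        rw [hdf x1]
        nlinarith [hw_bc1, hwt_bc1, mul_pos ha2 hε]
      · show deriv (fun y => wt y - w y + ε) L = 0
        rw [hdf L, hw_bc2, hwt_bc2]; ring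
    intro x hx
    by_contra hlt
    push_neg at hlt
    have := key (w x - wt x) (by linarith) x hx
    linarith
  -- zero derivative at interior zeros of v
  have hderiv_v_zero : ∀ c ∈ Ioo x1 L, wt c - w c = 0 → deriv wt c - deriv w c = 0 := by
    intro c hc hvc
    have hmin : IsMinOn (fun y => wt y - w y) (Icc x1 L) c := by
      intro x hx
      simp only [mem_setOf_eq, hvc]
      exact hv_nonneg x hx
    have hlm : IsLocalMin (fun y => wt y - w y) c := hmin.isLocalMin (Icc_mem_nhds hc.1 hc.2)
    have := hlm.deriv_eq_zero
    rwa [hdv c] at this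
  -- v > 0 at interior points where u > 0
  have hvpos_at_u : ∀ y ∈ Ioo x1 L, 0 < u y → 0 < wt y - w y := by
    intro y hy huy
    rcases lt_or_eq_of_le (hv_nonneg y ⟨hy.1.le, hy.2.le⟩) with h | h
    · exact h
    · exfalso
      have hvy : wt y - w y = 0 := h.symm
      have hdy : deriv (fun x => wt x - w x) y = 0 := by
        rw [hdv y]; exact hderiv_v_zero y hy hvy
      have hcurv : deriv (deriv (fun x => wt x - w x)) y < 0 := by
        rw [hddv y]
        have h1 := hw_ode y ⟨hy.1.le, hy.2.le⟩
        have h2 := hwt_ode y ⟨hy.1.le, hy.2.le⟩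
        have h3 := hderiv_v_zero y hy hvy
        have h4 := hw_pos y ⟨hy.1.le, hy.2.le⟩
        by_contra hX
        push_neg at hX
        nlinarith [mul_pos (mul_pos hp huy) h4,
          mul_nonneg hd2.le hX]
      obtain ⟨z, hz, hfz⟩ := negcurv_left hv_smooth hy.1 hdy hcurv
      have := hv_nonneg z ⟨hz.1.le, hz.2.le.trans hy.2.le⟩
      rw [hvy] at hfz
      linarith
  -- a point y0 in the open interval with u y0 > 0
  obtain ⟨x0, hx0mem, hx0pos⟩ := hu_pos
  have hy0 : ∃ y0 ∈ Ioo x1 L, 0 < u y0 := by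
    have h1 : ∀ᶠ y in nhds x0, 0 < u y :=
      ContinuousAt.eventually_lt continuousAt_const hu_cont.continuousAt hx0pos
    have h2 : x0 ∈ closure (Ioo x1 L) := by
      rw [closure_Ioo hx1L.ne]; exact hx0mem
    have h3 : (nhdsWithin x0 (Ioo x1 L)).NeBot := mem_closure_iff_nhdsWithin_neBot.mp h2
    have h4 : ∀ᶠ y in nhdsWithin x0 (Ioo x1 L), 0 < u y :=
      h1.filter_mono nhdsWithin_le_nhds
    obtain ⟨y, hy1, hy2⟩ := (h4.and self_mem_nhdsWithin).exists
    exact ⟨y, hy2, hy1⟩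
  obtain ⟨y0, hy0mem, hy0pos⟩ := hy0
  have hvy0 : 0 < wt y0 - w y0 := hvpos_at_u y0 hy0mem hy0pos
  -- the exponent for the barrier
  set β : ℝ := (a2 + q + d2) / d2 with hβdef
  have hβd2 : d2 * β = a2 + q + d2 := by rw [hβdef]; field_simp
  have hβ1 : 1 < β := by rw [hβdef, lt_div_iff₀ hd2]; linarith
  have hβpos : 0 < β := by linarith
  have hβkey : 0 < d2 * β^2 - a2 * β - q := by nlinarith
  have hβkey' : 0 < d2 * β^2 + a2 * β - q := by nlinarith
  -- main conclusion
  intro c hc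
  refine ⟨hw_pos c ⟨hc.1.le, hc.2.le⟩, ?_⟩
  rw [← sub_pos]
  rcases lt_or_eq_of_le (hv_nonneg c ⟨hc.1.le, hc.2.le⟩) with h | h
  · exact h
  exfalso
  have hvc : wt c - w c = 0 := h.symm
  have hdvc : deriv wt c - deriv w c = 0 := hderiv_v_zero c hc hvc
  rcases lt_trichotomy c y0 with hcy | hcy | hcy
  · -- c < y0 : barrier on [c, y0]
    set z : ℝ → ℝ := fun x => Real.exp (β * (x - c)) - 1 with hzdef
    have hz_deriv : ∀ x, HasDerivAt z (β * Real.exp (β * (x - c))) x := by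
      intro x
      have h1 : HasDerivAt (fun x => β * (x - c)) β x := by
        simpa using ((hasDerivAt_id x).sub_const c).const_mul β
      have h2 := (Real.hasDerivAt_exp (β * (x - c))).comp x h1
      exact (h2.sub_const 1).congr_deriv (mul_comm _ _)
    have hz2_deriv : ∀ x, HasDerivAt (fun x => β * Real.exp (β * (x - c)))
        (β * (β * Real.exp (β * (x - c)))) x := by
      intro x
      have h1 : HasDerivAt (fun x => β * (x - c)) β x := by
        simpa using ((hasDerivAt_id x).sub_const c).const_mul β
      have h2 := (Real.hasDerivAt_exp (β * (x - c))).comp x h1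
      have := h2.const_mul β
      exact this.congr_deriv (by ring)
    have hzd0 : 0 < z y0 := by
      have : 1 < Real.exp (β * (y0 - c)) := by
        exact Real.one_lt_exp_iff.mpr (by nlinarith)
      simp only [hzdef]; linarith
    set εb : ℝ := (wt y0 - w y0) / z y0 with hεdef
    have hεb : 0 < εb := div_pos hvy0 hzd0
    set ψ : ℝ → ℝ := fun x => wt x - w x - εb * z x with hψdef
    have hψ_smooth : ContDiff ℝ 2 ψ := by
      apply hv_smooth.sub
      apply ContDiff.mul contDiff_const
      apply ContDiff.sub _ contDiff_const
      exact (Real.contDiff_exp.comp ((contDiff_const.mul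
        (contDiff_id.sub contDiff_const)) : ContDiff ℝ ⊤ fun x : ℝ => β * (x - c))).of_le le_top
    have hdψ : ∀ x, deriv ψ x = (deriv wt x - deriv w x)
        - εb * (β * Real.exp (β * (x - c))) := by
      intro x
      exact (((hwt_d x).hasDerivAt.sub (hw_d x).hasDerivAt).sub
        ((hz_deriv x).const_mul εb)).deriv
    have hddψ : ∀ x, deriv (deriv ψ) x = (deriv (deriv wt) x - deriv (deriv w) x)
        - εb * (β * (β * Real.exp (β * (x - c)))) := by
      intro x
      have h1 : deriv ψ = fun x => (deriv wt x - deriv w x)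
          - εb * (β * Real.exp (β * (x - c))) := funext hdψ
      rw [h1]
      exact (((hwt_d2 x).hasDerivAt.sub (hw_d2 x).hasDerivAt).sub
        ((hz2_deriv x).const_mul εb)).deriv
    have hψlo : ψ c = 0 := by
      simp only [hψdef, hzdef, sub_self, mul_zero, Real.exp_zero]
      rw [hvc]; ring
    have hψhi : ψ y0 = 0 := by
      simp only [hψdef, hεdef]
      field_simp
      ring
    have hψnn := barrier_nonneg (a2 := a2) hd2 hq hcy hψ_smooth ?_ hψlo hψhi
    · -- derive contradiction from 0 ≤ deriv ψ c
      have hmin : IsMinOn ψ (Icc c y0) c := by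
        intro x hx
        simp only [mem_setOf_eq, hψlo]
        exact hψnn x hx
      have hdiff : DifferentiableAt ℝ ψ c := (hψ_smooth.differentiable (by norm_num)) c
      have h0 := min_left_deriv hcy hdiff hmin
      rw [hdψ c] at h0
      simp only [sub_self, mul_zero, Real.exp_zero, mul_one] at h0
      rw [hdvc] at h0
      nlinarith
    · -- the differential inequality for ψ
      intro x hx
      have hx' : x ∈ Icc x1 L := ⟨hc.1.le.trans hx.1, hx.2.trans hy0mem.2.le⟩
      have h1 := hw_ode x hx'
      have h2 := hwt_ode x hx'
      rw [hdψ x, hddψ x]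
      have he : 0 < Real.exp (β * (x - c)) := Real.exp_pos _
      have hu := hu_nonneg x hx'
      have hw0 := hw_pos x hx'
      simp only [hψdef, hzdef]
      nlinarith [mul_pos hεb (mul_pos he hβkey), mul_pos hεb hq,
        mul_nonneg (mul_nonneg hp.le hu) hw0.le]
  · exact absurd hvy0 (by rw [hcy] at hvc; rw [hvc]; exact lt_irrefl 0)
  · -- y0 < c : barrier on [y0, c]
    set z : ℝ → ℝ := fun x => Real.exp (β * (c - x)) - 1 with hzdef
    have hz_deriv : ∀ x, HasDerivAt z (-(β * Real.exp (β * (c - x)))) x := by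
      intro x
      have h1 : HasDerivAt (fun x => β * (c - x)) (-β) x := by
        simpa using ((hasDerivAt_id x).const_sub c).const_mul β
      have h2 := (Real.hasDerivAt_exp (β * (c - x))).comp x h1
      have h3 := h2.sub_const 1
      exact h3.congr_deriv (by ring)
    have hz2_deriv : ∀ x, HasDerivAt (fun x => -(β * Real.exp (β * (c - x))))
        (β * (β * Real.exp (β * (c - x)))) x := by
      intro x
      have h1 : HasDerivAt (fun x => β * (c - x)) (-β) x := by
        simpa using ((hasDerivAt_id x).const_sub c).const_mul β
      have h2 := (Real.hasDerivAt_exp (β * (c - x))).comp x h1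
      have := (h2.const_mul β).neg
      exact this.congr_deriv (by ring)
    have hzd0 : 0 < z y0 := by
      have : 1 < Real.exp (β * (c - y0)) := by
        exact Real.one_lt_exp_iff.mpr (by nlinarith)
      simp only [hzdef]; linarith
    set εb : ℝ := (wt y0 - w y0) / z y0 with hεdef
    have hεb : 0 < εb := div_pos hvy0 hzd0
    set ψ : ℝ → ℝ := fun x => wt x - w x - εb * z x with hψdef
    have hψ_smooth : ContDiff ℝ 2 ψ := by
      apply hv_smooth.sub
      apply ContDiff.mul contDiff_const
      apply ContDiff.sub _ contDiff_const
      exact (Real.contDiff_exp.comp ((contDiff_const.mul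
        (contDiff_const.sub contDiff_id)) : ContDiff ℝ ⊤ fun x : ℝ => β * (c - x))).of_le le_top
    have hdψ : ∀ x, deriv ψ x = (deriv wt x - deriv w x)
        - εb * (-(β * Real.exp (β * (c - x)))) := by
      intro x
      exact (((hwt_d x).hasDerivAt.sub (hw_d x).hasDerivAt).sub
        ((hz_deriv x).const_mul εb)).deriv
    have hddψ : ∀ x, deriv (deriv ψ) x = (deriv (deriv wt) x - deriv (deriv w) x)
        - εb * (β * (β * Real.exp (β * (c - x)))) := by
      intro x
      have h1 : deriv ψ = fun x => (deriv wt x - deriv w x)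
          - εb * (-(β * Real.exp (β * (c - x)))) := funext hdψ
      rw [h1]
      exact (((hwt_d2 x).hasDerivAt.sub (hw_d2 x).hasDerivAt).sub
        ((hz2_deriv x).const_mul εb)).deriv
    have hψhi : ψ c = 0 := by
      simp only [hψdef, hzdef, sub_self, mul_zero, Real.exp_zero]
      rw [hvc]; ring
    have hψlo : ψ y0 = 0 := by
      simp only [hψdef, hεdef]
      field_simp
      ring
    have hψnn := barrier_nonneg (a2 := a2) hd2 hq hcy hψ_smooth ?_ hψlo hψhi
    · -- derive contradiction from deriv ψ c ≤ 0
      have hmin : IsMinOn ψ (Icc y0 c) c := by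
        intro x hx
        simp only [mem_setOf_eq, hψhi]
        exact hψnn x hx
      have hdiff : DifferentiableAt ℝ ψ c := (hψ_smooth.differentiable (by norm_num)) c
      have h0 := min_right_deriv hcy hdiff hmin
      rw [hdψ c] at h0
      simp only [sub_self, mul_zero, Real.exp_zero, mul_one] at h0
      rw [hdvc] at h0
      nlinarith
    · -- the differential inequality for ψ
      intro x hx
      have hx' : x ∈ Icc x1 L := ⟨hy0mem.1.le.trans hx.1, hx.2.trans hc.2.le⟩
      have h1 := hw_ode x hx'
      have h2 := hwt_ode x hx'
      rw [hdψ x, hddψ x]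
      have he : 0 < Real.exp (β * (c - x)) := Real.exp_pos _
      have hu := hu_nonneg x hx'
      have hw0 := hw_pos x hx'
      simp only [hψdef, hzdef]
      nlinarith [mul_pos hεb (mul_pos he hβkey'), mul_pos hεb hq,
        mul_nonneg (mul_nonneg hp.le hu) hw0.le]
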